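/- arXiv:2508.00345 — 2 statements merged into one kernel-verified Lean document; each statement's English description precedes it below -/
import Mathlib

section
/- The oligopsony markdown μ(x) = θ·(1−(1−x)^{1/θ})/x is (weakly) decreasing in x on (0,1] for any fixed θ ∈ (0,1]. -/
/-!
Writing `p = 1/θ ≥ 1`, the markdown is `θ` times `(1 - (1 - x)^p) / x`, the slope of the convex
function `t ↦ t^p` on the chord from `1 - x` to `1`. Slopes of chords of a convex function
ending at a fixed point grow with the other end point, and `1 - x` decreases as `x` grows.
-/

theorem ConvexOn.antitoneOn_slope_to_sub {𝕜 : Type*} [Field 𝕜] [LinearOrder 𝕜]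
    [IsStrictOrderedRing 𝕜] {s t : Set 𝕜} {f : 𝕜 → 𝕜} (hf : ConvexOn 𝕜 s f) {c : 𝕜} (hc : c ∈ s)
    (ht : ∀ x ∈ t, 0 < x ∧ c - x ∈ s) :
    AntitoneOn (fun x => (f c - f (c - x)) / x) t := by
  intro a ha b hb hab
  obtain ⟨ha0, has⟩ := ht a ha
  obtain ⟨hb0, hbs⟩ := ht b hb
  have hslope := hf.secant_mono hc hbs has (by linarith) (by linarith) (by linarith)
  simpa only [sub_sub_cancel_left, div_neg, ← neg_div, neg_sub] using hslope

/-- The oligopsony markdown `μ(x) = θ·(1−(1−x)^{1/θ})/x` is weakly decreasing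
in `x` on `(0,1]` for any fixed `θ ∈ (0,1]`. -/
theorem oligopsony_markdown_antitoneOn (θ : ℝ) (hθ : θ ∈ Set.Ioc (0 : ℝ) 1) :
    AntitoneOn (fun x : ℝ => θ * (1 - (1 - x) ^ (1 / θ)) / x) (Set.Ioc 0 1) := by
  obtain ⟨hθ0, hθ1⟩ := hθ
  have hconvex := convexOn_rpow (one_le_one_div hθ0 hθ1)
  have hslope := hconvex.antitoneOn_slope_to_sub (c := 1) (t := Set.Ioc 0 1) (by simp)
    fun x ⟨hx0, hx1⟩ => ⟨hx0, by simpa using hx1⟩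
  intro a ha b hb hab
  simpa only [mul_div_assoc, Real.one_rpow] using
    mul_le_mul_of_nonneg_left (hslope ha hb hab) hθ0.le
end

section
/- For ρ > η > 1 and s ∈ (0,1), the leverage term λ(s) = s·(η−1)/((1 − (1−s)^{(η−1)/(ρ−1)})·(ε(s)−1)) with ε(s) = ρ(1−s)+ηs satisfies λ(s) ≥ 1. -/
/-!
Put `x = 1 - s` and `θ = (η - 1)/(ρ - 1) ∈ (0, 1)`. Then `s(η - 1) = (ρ - 1) θ (1 - x)` and
`ε(s) - 1 = (ρ - 1)(x + θ(1 - x))`, so `λ(s) ≥ 1` becomes `(1 - x^θ)(x + θ(1 - x)) ≤ θ(1 - x)`.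
After expanding, this is `x = x^(1-θ) x^θ ≤ ((1 - θ)x + θ) x^θ`, i.e. Bernoulli's inequality
`x^(1-θ) ≤ 1 + (1 - θ)(x - 1)` for the exponent `1 - θ ∈ [0, 1]`.
-/

open Real

lemma rpow_one_sub_le_one_sub_mul_add {x θ : ℝ} (hx : 0 ≤ x) (hθ0 : 0 ≤ θ) (hθ1 : θ ≤ 1) :
    x ^ (1 - θ) ≤ (1 - θ) * x + θ := by
  have h := rpow_one_add_le_one_add_mul_self (s := x - 1) (p := 1 - θ) (by linarith)
    (by linarith) (by linarith)
  rw [add_sub_cancel] at h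
  linarith

lemma one_sub_rpow_mul_le {x θ : ℝ} (hx : 0 < x) (hθ0 : 0 ≤ θ) (hθ1 : θ ≤ 1) :
    (1 - x ^ θ) * (x + θ * (1 - x)) ≤ θ * (1 - x) := by
  have hsplit : x = x ^ (1 - θ) * x ^ θ := by rw [← rpow_add hx]; simp
  have hbern : x ^ (1 - θ) * x ^ θ ≤ ((1 - θ) * x + θ) * x ^ θ :=
    mul_le_mul_of_nonneg_right (rpow_one_sub_le_one_sub_mul_add hx.le hθ0 hθ1)
      (rpow_nonneg hx.le θ)
  nlinarith

/-- For `ρ > η > 1` and `s ∈ (0,1)`, the leverage term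
`λ(s) = s(η−1)/((1−(1−s)^{(η−1)/(ρ−1)})(ε(s)−1))`, with `ε(s) = ρ(1−s)+ηs`,
satisfies `λ(s) ≥ 1`. -/
theorem leverage_ge_one (ρ η s : ℝ) (hρη : η < ρ) (hη : 1 < η)
    (hs : s ∈ Set.Ioo (0 : ℝ) 1) :
    1 ≤ s * (η - 1) /
        ((1 - (1 - s) ^ ((η - 1) / (ρ - 1))) * ((ρ * (1 - s) + η * s) - 1)) := by
  obtain ⟨hs0, hs1⟩ := hs
  set θ := (η - 1) / (ρ - 1)
  have hρ : 0 < ρ - 1 := by linarith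
  have hθ0 : 0 < θ := div_pos (by linarith) hρ
  have hθ1 : θ < 1 := (div_lt_one hρ).2 (by linarith)
  have hηθ : η - 1 = θ * (ρ - 1) := (div_mul_cancel₀ _ hρ.ne').symm
  have hε : ρ * (1 - s) + η * s - 1 = (ρ - 1) * ((1 - s) + θ * s) := by
    linear_combination s * hηθ
  have hpow : (1 - s) ^ θ < 1 := rpow_lt_one (by linarith) (by linarith) hθ0
  have hkey := one_sub_rpow_mul_le (x := 1 - s) (by linarith) hθ0.le hθ1.le
  rw [sub_sub_cancel] at hkey
  have hden : 0 < (1 - (1 - s) ^ θ) * ((ρ - 1) * ((1 - s) + θ * s)) :=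
    mul_pos (by linarith) (mul_pos hρ (by positivity))
  rw [hε, one_le_div hden, hηθ]
  calc (1 - (1 - s) ^ θ) * ((ρ - 1) * ((1 - s) + θ * s))
      = (ρ - 1) * ((1 - (1 - s) ^ θ) * ((1 - s) + θ * s)) := by ring
    _ ≤ (ρ - 1) * (θ * s) := by gcongr
    _ = s * (θ * (ρ - 1)) := by ring
end
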